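/- arXiv:2011.09830 — 2 statements merged into one kernel-verified Lean document; each statement's English description precedes it below -/
import Mathlib

section
/- Every strongly stable set B for a continuous flow φ on a compact metric space is stable, i.e., it has a neighborhood base of forward invariant sets. -/
open Set Metric Topology MeasureTheory

/-- A continuous flow on `X`: jointly continuous, `φ 0 = id`, group property. -/
def IsFlow {X : Type*} [TopologicalSpace X] (φ : ℝ → X → X) : Prop :=
  Continuous (fun p : X × ℝ => φ p.2 p.1) ∧ (∀ x, φ 0 x = x) ∧
    ∀ s t x, φ (s + t) x = φ s (φ t x)

/-- Forward invariance of a set under the flow. -/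
def FwdInvariant {X : Type*} (φ : ℝ → X → X) (S : Set X) : Prop :=
  ∀ t, 0 ≤ t → ∀ x ∈ S, φ t x ∈ S

/-- The omega-limit set of a point. -/
def omegaPt {X : Type*} [TopologicalSpace X] (φ : ℝ → X → X) (x : X) : Set X :=
  ⋂ T : ℝ, closure {y | ∃ t, T ≤ t ∧ φ t x = y}

/-- The omega-limit set of a set. -/
def omegaSet {X : Type*} [TopologicalSpace X] (φ : ℝ → X → X) (U : Set X) : Set X :=
  ⋂ T : ℝ, closure {y | ∃ t, T ≤ t ∧ ∃ u ∈ U, φ t u = y}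

/-- The complementary set `B• = {x : ω(x) ∩ B = ∅}`. -/
def bulletSet {X : Type*} [TopologicalSpace X] (φ : ℝ → X → X) (B : Set X) : Set X :=
  {x | omegaPt φ x ∩ B = ∅}

/-- A closed set is stable if it has a neighborhood base of forward invariant sets. -/
def IsStable {X : Type*} [TopologicalSpace X] (φ : ℝ → X → X) (B : Set X) : Prop :=
  IsClosed B ∧ ∀ N ∈ nhdsSet B, ∃ V ∈ nhdsSet B, FwdInvariant φ V ∧ V ⊆ N

/-- A strongly stable set, via a family of closed nested neighborhoods `U η`, `η ∈ (0,1)`,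
and times `T η` bounded on compact subsets of `(0,1)`. -/
def StronglyStable {X : Type*} [MetricSpace X] (φ : ℝ → X → X) (B : Set X) : Prop :=
  IsClosed B ∧ ∃ (U : ℝ → Set X) (T : ℝ → ℝ),
    (∀ η ∈ Ioo (0:ℝ) 1, IsClosed (U η) ∧ B ⊆ interior (U η)) ∧
    (∀ η lam, η ∈ Ioo (0:ℝ) 1 → lam ∈ Ioo (0:ℝ) 1 → η < lam → U η ⊆ U lam) ∧
    (∀ η lam, η ∈ Ioo (0:ℝ) 1 → lam ∈ Ioo (0:ℝ) 1 → η < lam →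
      {x | infDist x (U η) < lam - η} ⊆ U lam) ∧
    (B = ⋂ η ∈ Ioo (0:ℝ) 1, omegaSet φ (U η)) ∧
    (∀ η ∈ Ioo (0:ℝ) 1, 0 < T η) ∧
    (∀ K, K ⊆ Ioo (0:ℝ) 1 → IsCompact K → Bornology.IsBounded (T '' K)) ∧
    ∀ η ∈ Ioo (0:ℝ) 1, closure {y | ∃ t, T η ≤ t ∧ ∃ u ∈ U η, φ t u = y} ⊆ U η

/-- A strong `(ε,T)`-chain from `x` to `y`. -/
def StrongChain {X : Type*} [MetricSpace X] (φ : ℝ → X → X) (ε T : ℝ) (x y : X) : Prop :=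
  ∃ (n : ℕ) (xs : ℕ → X) (ts : ℕ → ℝ), xs 0 = x ∧ xs (n + 1) = y ∧
    (∀ i ≤ n, T ≤ ts i) ∧
    ∑ i ∈ Finset.range (n + 1), dist (φ (ts i) (xs i)) (xs (i + 1)) < ε

/-- The strong chain recurrent set. -/
def SCR {X : Type*} [MetricSpace X] (φ : ℝ → X → X) : Set X :=
  {x | ∀ ε > 0, ∀ T > 0, StrongChain φ ε T x x}

/-- `Ω(Y,ε,T)`: points reachable from `Y` by a strong `(ε,T)`-chain. -/
def OmegaChain {X : Type*} [MetricSpace X] (φ : ℝ → X → X) (Y : Set X) (ε T : ℝ) : Set X :=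
  {y | ∃ x ∈ Y, StrongChain φ ε T x y}

/-- `Ω̄(Y,ε,T) = ⋂_{η>0} Ω(Y,ε+η,T)`. -/
def OmegaBar {X : Type*} [MetricSpace X] (φ : ℝ → X → X) (Y : Set X) (ε T : ℝ) : Set X :=
  ⋂ η ∈ Ioi (0:ℝ), OmegaChain φ Y (ε + η) T

/-
Write `B = ⋂_η ω(U_η)` with `ω(U) = ⋂_τ cl(⋃_{t ≥ τ} φ_t U)`. Both intersections are directed
(the `U_η` are nested), so by compactness one set `cl(⋃_{t ≥ τ} φ_t U_η)` already lies in a given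
open `O ⊇ B`. The points whose whole forward orbit stays in `O` form a forward invariant subset
of `O`, and it is a neighbourhood of `B`: near `b ∈ B ⊆ interior U_η` an orbit stays in `O` for
`t ≤ τ` by continuity (`B` is invariant, being an intersection of ω-limit sets) and for `t ≥ τ`
because it starts in `U_η`.
-/

def orbitTail {X : Type*} (φ : ℝ → X → X) (U : Set X) (τ : ℝ) : Set X :=
  {y | ∃ t, τ ≤ t ∧ ∃ u ∈ U, φ t u = y}

theorem orbitTail_mono {X : Type*} {φ : ℝ → X → X} {U V : Set X} {τ σ : ℝ} (hUV : U ⊆ V)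
    (hστ : σ ≤ τ) : orbitTail φ U τ ⊆ orbitTail φ V σ := by
  rintro y ⟨t, ht, u, hu, rfl⟩
  exact ⟨t, hστ.trans ht, u, hUV hu, rfl⟩

section Flow

variable {X : Type*} [TopologicalSpace X] {φ : ℝ → X → X}

theorem IsFlow.continuous_apply (hφ : IsFlow φ) (t : ℝ) : Continuous (φ t) :=
  hφ.1.comp (continuous_id.prodMk continuous_const)

theorem omegaSet_eq_iInter_closure_orbitTail (U : Set X) :
    omegaSet φ U = ⋂ τ, closure (orbitTail φ U τ) :=
  rfl

theorem mapsTo_orbitTail (hφ : IsFlow φ) (U : Set X) (s τ : ℝ) :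
    MapsTo (φ s) (orbitTail φ U τ) (orbitTail φ U (s + τ)) := by
  rintro _ ⟨t, ht, u, hu, rfl⟩
  exact ⟨s + t, by linarith, u, hu, hφ.2.2 s t u⟩

theorem mapsTo_omegaSet (hφ : IsFlow φ) (U : Set X) (s : ℝ) :
    MapsTo (φ s) (omegaSet φ U) (omegaSet φ U) := by
  intro x hx
  simp only [omegaSet_eq_iInter_closure_orbitTail, mem_iInter] at hx ⊢
  intro τ
  have hmaps := (mapsTo_orbitTail hφ U s (τ - s)).closure (hφ.continuous_apply s)
  simpa using hmaps (hx (τ - s))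

theorem fwdInvariant_biInter_omegaSet {ι : Type*} (hφ : IsFlow φ) (I : Set ι) (U : ι → Set X) :
    FwdInvariant φ (⋂ i ∈ I, omegaSet φ (U i)) := by
  intro s _ x hx
  simp only [mem_iInter] at hx ⊢
  exact fun i hi => mapsTo_omegaSet hφ (U i) s (hx i hi)

theorem exists_closure_orbitTail_subset [T2Space X] [CompactSpace X] {ι : Type*} [LinearOrder ι]
    {I : Set ι} (hI : I.Nonempty) {U : ι → Set X} (hU : MonotoneOn U I) {O : Set X}
    (hO : IsOpen O) (hsub : ⋂ i ∈ I, omegaSet φ (U i) ⊆ O) :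
    ∃ i ∈ I, ∃ τ, closure (orbitTail φ (U i) τ) ⊆ O := by
  have : Nonempty (I × ℝ) := ⟨(⟨_, hI.some_mem⟩, 0)⟩
  have hdir : Directed (· ⊇ ·) fun p : I × ℝ => closure (orbitTail φ (U p.1) p.2) := by
    rintro ⟨i, σ⟩ ⟨j, τ⟩
    have hmin : min i.1 j.1 ∈ I := by rcases min_choice i.1 j.1 with h | h <;> simp [h]
    refine ⟨(⟨_, hmin⟩, max σ τ), closure_mono ?_, closure_mono ?_⟩
    · exact orbitTail_mono (hU hmin i.2 (min_le_left _ _)) (le_max_left _ _)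
    · exact orbitTail_mono (hU hmin j.2 (min_le_right _ _)) (le_max_right _ _)
  have hinter : ⋂ p : I × ℝ, closure (orbitTail φ (U p.1) p.2) = ⋂ i ∈ I, omegaSet φ (U i) := by
    ext x
    simp only [mem_iInter, Prod.forall, Subtype.forall, omegaSet_eq_iInter_closure_orbitTail]
  obtain ⟨⟨i, τ⟩, hiτ⟩ := exists_subset_nhds_of_isCompact hdir
    (fun _ => isClosed_closure.isCompact) fun x hx => hO.mem_nhds (hsub (hinter ▸ hx))
  exact ⟨i, i.2, τ, hiτ⟩

theorem fwdInvariant_setOf_forall_mem (hφ : IsFlow φ) (O : Set X) :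
    FwdInvariant φ {x | ∀ t, 0 ≤ t → φ t x ∈ O} := by
  intro s hs x hx t ht
  simpa only [hφ.2.2] using hx (t + s) (add_nonneg ht hs)

theorem setOf_forall_mem_subset (hφ : IsFlow φ) (O : Set X) :
    {x | ∀ t, 0 ≤ t → φ t x ∈ O} ⊆ O := fun x hx => hφ.2.1 x ▸ hx 0 le_rfl

theorem setOf_forall_mem_mem_nhds (hφ : IsFlow φ) {O U : Set X} {x : X} {τ : ℝ} (hO : IsOpen O)
    (hU : U ∈ 𝓝 x) (htail : orbitTail φ U τ ⊆ O) (hx : ∀ t ∈ Icc 0 τ, φ t x ∈ O) :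
    {y | ∀ t, 0 ≤ t → φ t y ∈ O} ∈ 𝓝 x := by
  have hfinite : ∀ᶠ y in 𝓝 x, ∀ t ∈ Icc 0 τ, φ t y ∈ O :=
    isCompact_Icc.eventually_forall_of_forall_eventually fun t ht =>
      (hO.preimage hφ.1).mem_nhds (hx t ht)
  filter_upwards [hfinite, hU] with y hy hyU t ht
  rcases le_total t τ with htτ | hτt
  · exact hy t ⟨ht, htτ⟩
  · exact htail ⟨t, hτt, y, hyU, rfl⟩

end Flow

theorem stmt4 {X : Type*} [MetricSpace X] [CompactSpace X] (φ : ℝ → X → X)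
    (hφ : IsFlow φ) (B : Set X) (hB : StronglyStable φ B) :
    IsStable φ B := by
  obtain ⟨hBcl, U, -, hUint, hUmono, -, hBeq, -⟩ := hB
  refine ⟨hBcl, fun N hN => ?_⟩
  obtain ⟨O, hO, hBO, hON⟩ := mem_nhdsSet_iff_exists.mp hN
  obtain ⟨η, hη, τ, hτ⟩ := exists_closure_orbitTail_subset (φ := φ) (nonempty_Ioo.mpr one_pos)
    (monotoneOn_iff_forall_lt.mpr fun _ ha _ hb => hUmono _ _ ha hb) hO (hBeq ▸ hBO)
  have hBinv : FwdInvariant φ B := hBeq ▸ fwdInvariant_biInter_omegaSet hφ _ U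
  refine ⟨{x | ∀ t, 0 ≤ t → φ t x ∈ O}, mem_nhdsSet_iff_forall.mpr fun b hb => ?_,
    fwdInvariant_setOf_forall_mem hφ O, (setOf_forall_mem_subset hφ O).trans hON⟩
  exact setOf_forall_mem_mem_nhds hφ hO (mem_interior_iff_mem_nhds.mp ((hUint η hη).2 hb))
    (subset_closure.trans hτ) fun t ht => hBO (hBinv t ht.1 b hb)
end

section
/- Let φ be a continuous flow on a compact metric space (X,d), let B be a strongly stable set with associated family (U_η)_{η∈(0,1)}, and suppose B• := {x : ω(x) ∩ B = ∅} is nonempty. Then there exists η₀ ∈ (0,1) such that the set B*_{η₀} := {x ∈ X : φ_t(x) ∉ U_{η₀} for all t ≥ 0} is nonempty. -/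
open Set Metric Topology MeasureTheory

/-
If `x ∈ B•` met every `U η`, the group law would turn a visit `φ t₀ x ∈ U η` into
`ω(x) ⊆ ω(U η)`, hence `ω(x) ⊆ ⋂ η, ω(U η) = B`; since `ω(x)` is nonempty in a compact space,
this contradicts `ω(x) ∩ B = ∅`. So `x` itself avoids some `U η₀` for all forward time.
-/

theorem omegaPt_nonempty {X : Type*} [TopologicalSpace X] [CompactSpace X]
    (φ : ℝ → X → X) (x : X) : (omegaPt φ x).Nonempty := by
  refine IsCompact.nonempty_iInter_of_directed_nonempty_isCompact_isClosed _ ?_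
    (fun S => ⟨φ S x, subset_closure ⟨S, le_rfl, rfl⟩⟩)
    (fun _ => isClosed_closure.isCompact) (fun _ => isClosed_closure)
  refine Antitone.directed_ge fun S₁ S₂ hS => closure_mono ?_
  rintro _ ⟨t, ht, rfl⟩
  exact ⟨t, hS.trans ht, rfl⟩

theorem omegaPt_subset_omegaSet_of_mem {X : Type*} [TopologicalSpace X] {φ : ℝ → X → X}
    (hφ : ∀ s t x, φ (s + t) x = φ s (φ t x)) {U : Set X} {x : X} {t₀ : ℝ}
    (hx : φ t₀ x ∈ U) : omegaPt φ x ⊆ omegaSet φ U := by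
  refine subset_iInter fun S => (iInter_subset _ (S + t₀)).trans (closure_mono ?_)
  rintro _ ⟨t, ht, rfl⟩
  refine ⟨t - t₀, by linarith, φ t₀ x, hx, ?_⟩
  rw [← hφ, sub_add_cancel]

theorem stmt5_general {X : Type*} [MetricSpace X] [CompactSpace X] (φ : ℝ → X → X)
    (hφ : IsFlow φ) (B : Set X)
    (U : ℝ → Set X)
    (hUii : B = ⋂ η ∈ Ioo (0:ℝ) 1, omegaSet φ (U η))
    (hbul : (bulletSet φ B).Nonempty) :
    ∃ η₀ ∈ Ioo (0:ℝ) 1, {x : X | ∀ t, 0 ≤ t → φ t x ∉ U η₀}.Nonempty := by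
  obtain ⟨x, hx⟩ := hbul
  by_contra! hmeets
  have hωB : omegaPt φ x ⊆ B := by
    rw [hUii]
    refine subset_iInter₂ fun η hη => ?_
    obtain ⟨t₀, -, ht₀⟩ : ∃ t, 0 ≤ t ∧ φ t x ∈ U η := by
      by_contra! hx_avoids
      exact (hmeets η hη).subset hx_avoids
    exact omegaPt_subset_omegaSet_of_mem hφ.2.2 ht₀
  obtain ⟨y, hy⟩ := omegaPt_nonempty φ x
  exact (eq_empty_iff_forall_notMem.1 hx y) ⟨hy, hωB hy⟩

theorem stmt5 {X : Type*} [MetricSpace X] [CompactSpace X] (φ : ℝ → X → X)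
    (hφ : IsFlow φ) (B : Set X) (hBcl : IsClosed B)
    (U : ℝ → Set X) (T : ℝ → ℝ)
    (hUcl : ∀ η ∈ Ioo (0:ℝ) 1, IsClosed (U η) ∧ B ⊆ interior (U η))
    (hUnest : ∀ η lam, η ∈ Ioo (0:ℝ) 1 → lam ∈ Ioo (0:ℝ) 1 → η < lam → U η ⊆ U lam)
    (hUi : ∀ η lam, η ∈ Ioo (0:ℝ) 1 → lam ∈ Ioo (0:ℝ) 1 → η < lam →
      {x | infDist x (U η) < lam - η} ⊆ U lam)
    (hUii : B = ⋂ η ∈ Ioo (0:ℝ) 1, omegaSet φ (U η))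
    (hTpos : ∀ η ∈ Ioo (0:ℝ) 1, 0 < T η)
    (hTbdd : ∀ K, K ⊆ Ioo (0:ℝ) 1 → IsCompact K → Bornology.IsBounded (T '' K))
    (hUiii : ∀ η ∈ Ioo (0:ℝ) 1, closure {y | ∃ t, T η ≤ t ∧ ∃ u ∈ U η, φ t u = y} ⊆ U η)
    (hbul : (bulletSet φ B).Nonempty) :
    ∃ η₀ ∈ Ioo (0:ℝ) 1, {x : X | ∀ t, 0 ≤ t → φ t x ∉ U η₀}.Nonempty :=
  stmt5_general φ hφ B U hUii hbul
end
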